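/- Let W be symmetric doubly stochastic with connected graph, Ŵ = (W-I_Q)⊗I_P, and Ψ₀ = JᵀJ block diagonal, where for each agent q the local Jacobian is J_q ∈ ℝ^{MD×P}. If null(J₁) ∩ ⋯ ∩ null(J_Q) = {0}, then Ŵ - ηΨ₀ is negative definite for any η > 0. -/

import Mathlib

open Matrix
open scoped Kronecker

/-- The block diagonal matrix `diag(B 1, …, B Q)` with blocks indexed first by agent. -/
def blockDiag' {Q P : ℕ} (B : Fin Q → Matrix (Fin P) (Fin P) ℝ) :
    Matrix (Fin Q × Fin P) (Fin Q × Fin P) ℝ :=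
  Matrix.of fun qp q'p' => if qp.1 = q'p'.1 then B qp.1 qp.2 q'p'.2 else 0

lemma lap_quad {Q : ℕ} (W : Matrix (Fin Q) (Fin Q) ℝ)
    (hrow : ∀ i, ∑ j, W i j = 1) (hcol : ∀ j, ∑ i, W i j = 1)
    (y : Fin Q → ℝ) :
    y ⬝ᵥ (W - 1) *ᵥ y = -(1/2) * ∑ i, ∑ j, W i j * (y i - y j)^2 := by
  have h1 : ∑ i, ∑ j, W i j * (y i - y j)^2
      = (∑ i, ∑ j, W i j * y i ^2) - 2 * (∑ i, ∑ j, y i * W i j * y j)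
        + ∑ i, ∑ j, W i j * y j ^2 := by
    rw [Finset.mul_sum, ← Finset.sum_sub_distrib, ← Finset.sum_add_distrib]
    refine Finset.sum_congr rfl fun i _ => ?_
    rw [Finset.mul_sum, ← Finset.sum_sub_distrib, ← Finset.sum_add_distrib]
    exact Finset.sum_congr rfl fun j _ => by ring
  have hA : (∑ i, ∑ j, W i j * y i ^2) = ∑ i, y i ^2 := by
    refine Finset.sum_congr rfl fun i _ => ?_
    rw [← Finset.sum_mul, hrow, one_mul]
  have hB : (∑ i, ∑ j, W i j * y j ^2) = ∑ j, y j ^2 := by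
    rw [Finset.sum_comm]
    refine Finset.sum_congr rfl fun j _ => ?_
    rw [← Finset.sum_mul, hcol, one_mul]
  have hL : y ⬝ᵥ (W - 1) *ᵥ y
      = (∑ i, ∑ j, y i * W i j * y j) - ∑ i, y i ^2 := by
    simp only [dotProduct, mulVec, Matrix.sub_apply, one_apply, Finset.mul_sum,
      ← Finset.sum_sub_distrib]
    refine Finset.sum_congr rfl fun i _ => ?_
    rw [show y i ^ 2 = ∑ j, if i = j then y i * y j else 0 by
      simp [Finset.sum_ite_eq, sq]]
    rw [← Finset.sum_sub_distrib]
    refine Finset.sum_congr rfl fun j _ => ?_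
    by_cases h : i = j <;> simp [h] <;> ring
  rw [hL, h1, hA, hB]; ring

lemma lap_nonpos {Q : ℕ} (W : Matrix (Fin Q) (Fin Q) ℝ)
    (hnonneg : ∀ i j, 0 ≤ W i j)
    (hrow : ∀ i, ∑ j, W i j = 1) (hcol : ∀ j, ∑ i, W i j = 1)
    (y : Fin Q → ℝ) : y ⬝ᵥ (W - 1) *ᵥ y ≤ 0 := by
  rw [lap_quad W hrow hcol]
  have : (0:ℝ) ≤ ∑ i, ∑ j, W i j * (y i - y j)^2 :=
    Finset.sum_nonneg fun i _ => Finset.sum_nonneg fun j _ =>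
      mul_nonneg (hnonneg i j) (sq_nonneg _)
  nlinarith

lemma lap_eq_zero {Q : ℕ} (W : Matrix (Fin Q) (Fin Q) ℝ)
    (hnonneg : ∀ i j, 0 ≤ W i j)
    (hrow : ∀ i, ∑ j, W i j = 1) (hcol : ∀ j, ∑ i, W i j = 1)
    (y : Fin Q → ℝ) (h : y ⬝ᵥ (W - 1) *ᵥ y = 0) : W *ᵥ y = y := by
  rw [lap_quad W hrow hcol] at h
  have hsum : ∑ i, ∑ j, W i j * (y i - y j)^2 = 0 := by linarith
  have hterm : ∀ i j, W i j * (y i - y j)^2 = 0 := by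
    intro i j
    have h1 : ∀ i ∈ Finset.univ, (0:ℝ) ≤ ∑ j, W i j * (y i - y j)^2 :=
      fun i _ => Finset.sum_nonneg fun j _ => mul_nonneg (hnonneg i j) (sq_nonneg _)
    have h2 := (Finset.sum_eq_zero_iff_of_nonneg h1).mp hsum i (Finset.mem_univ i)
    have h3 : ∀ j ∈ Finset.univ, (0:ℝ) ≤ W i j * (y i - y j)^2 :=
      fun j _ => mul_nonneg (hnonneg i j) (sq_nonneg _)
    exact (Finset.sum_eq_zero_iff_of_nonneg h3).mp h2 j (Finset.mem_univ j)
  funext i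
  have : ∀ j, W i j * y j = W i j * y i := by
    intro j
    rcases mul_eq_zero.mp (hterm i j) with h0 | h0
    · simp [h0]
    · have : y i = y j := by nlinarith [sq_nonneg (y i - y j)]
      rw [this]
  simp only [mulVec, dotProduct]
  calc ∑ j, W i j * y j = ∑ j, W i j * y i := by simp [this]
    _ = y i := by rw [← Finset.sum_mul, hrow, one_mul]


/-- Proposition 1 (DGD gradient flow stability): for `W` symmetric doubly stochastic with
connected graph, `Ŵ = (W - I_Q) ⊗ I_P`, and `Ψ₀ = diag(J₁ᵀJ₁, …, J_QᵀJ_Q)`, if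
`null(J₁) ∩ ⋯ ∩ null(J_Q) = {0}` then `Ŵ - η Ψ₀` is negative definite for any `η > 0`. -/
theorem dgd_gradflow_negdef (Q P M D : ℕ) (hQ : 0 < Q)
    (W : Matrix (Fin Q) (Fin Q) ℝ)
    (hsymm : W.IsSymm)
    (hnonneg : ∀ i j, 0 ≤ W i j)
    (hrow : ∀ i, ∑ j, W i j = 1)
    (hcol : ∀ j, ∑ i, W i j = 1)
    (hconn : ∀ x : Fin Q → ℝ, W *ᵥ x = x → ∃ c : ℝ, x = fun _ => c)
    (J : Fin Q → Matrix (Fin (M * D)) (Fin P) ℝ)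
    (hnull : ∀ v : Fin P → ℝ, (∀ q, J q *ᵥ v = 0) → v = 0)
    (η : ℝ) (hη : 0 < η) :
    ∀ x : Fin Q × Fin P → ℝ, x ≠ 0 →
      x ⬝ᵥ (((W - 1) ⊗ₖ (1 : Matrix (Fin P) (Fin P) ℝ)) -
        η • blockDiag' (fun q => (J q)ᵀ * J q)) *ᵥ x < 0 := by
  intro x hx
  set y : Fin P → Fin Q → ℝ := fun p q => x (q, p) with hy
  set z : Fin Q → Fin P → ℝ := fun q p => x (q, p) with hz
  -- decompose quadratic form
  have hsplit : x ⬝ᵥ (((W - 1) ⊗ₖ (1 : Matrix (Fin P) (Fin P) ℝ)) -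
        η • blockDiag' (fun q => (J q)ᵀ * J q)) *ᵥ x
      = x ⬝ᵥ ((W - 1) ⊗ₖ (1 : Matrix (Fin P) (Fin P) ℝ)) *ᵥ x
        - η * (x ⬝ᵥ blockDiag' (fun q => (J q)ᵀ * J q) *ᵥ x) := by
    rw [sub_mulVec, dotProduct_sub, smul_mulVec, dotProduct_smul]
    simp [smul_eq_mul]
  have hK : x ⬝ᵥ ((W - 1) ⊗ₖ (1 : Matrix (Fin P) (Fin P) ℝ)) *ᵥ x
      = ∑ p, (y p) ⬝ᵥ (W - 1) *ᵥ (y p) := by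
    simp only [dotProduct, mulVec, kroneckerMap_apply, one_apply]
    rw [Fintype.sum_prod_type, Finset.sum_comm]
    refine Finset.sum_congr rfl fun p _ => ?_
    refine Finset.sum_congr rfl fun q _ => ?_
    congr 1
    rw [Fintype.sum_prod_type, Finset.sum_comm]
    simp only [mul_ite, mul_one, mul_zero, ite_mul, zero_mul]
    rw [Finset.sum_comm]
    simp [Finset.sum_ite_eq' Finset.univ p, dotProduct, hy]
  have hq : ∀ q, (z q) ⬝ᵥ ((J q)ᵀ * J q) *ᵥ (z q)
      = (J q *ᵥ z q) ⬝ᵥ (J q *ᵥ z q) := by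
    intro q
    rw [← mulVec_mulVec, dotProduct_mulVec, vecMul_transpose]
  have hΨ : x ⬝ᵥ _root_.blockDiag' (fun q => (J q)ᵀ * J q) *ᵥ x
      = ∑ q, (J q *ᵥ z q) ⬝ᵥ (J q *ᵥ z q) := by
    have hΨ1 : x ⬝ᵥ _root_.blockDiag' (fun q => (J q)ᵀ * J q) *ᵥ x
        = ∑ q, (z q) ⬝ᵥ ((J q)ᵀ * J q) *ᵥ (z q) := by
      simp only [dotProduct, mulVec, _root_.blockDiag', Matrix.of_apply]
      rw [Fintype.sum_prod_type]
      refine Finset.sum_congr rfl fun q _ => ?_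
      refine Finset.sum_congr rfl fun p _ => ?_
      congr 1
      rw [Fintype.sum_prod_type]
      simp [ite_mul, Finset.sum_ite_eq' Finset.univ q, hz]
    rw [hΨ1]
    exact Finset.sum_congr rfl fun q _ => hq q
  rw [hsplit, hK, hΨ]
  have hKle : ∑ p, (y p) ⬝ᵥ (W - 1) *ᵥ (y p) ≤ 0 :=
    Finset.sum_nonpos fun p _ => lap_nonpos W hnonneg hrow hcol (y p)
  have hΨge : (0:ℝ) ≤ ∑ q, (J q *ᵥ z q) ⬝ᵥ (J q *ᵥ z q) :=
    Finset.sum_nonneg fun q _ => Finset.sum_nonneg fun i _ => mul_self_nonneg _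
  by_contra hcon
  push_neg at hcon
  have hB0 : ∑ q, (J q *ᵥ z q) ⬝ᵥ (J q *ᵥ z q) = 0 := by nlinarith
  have hA0 : ∑ p, (y p) ⬝ᵥ (W - 1) *ᵥ (y p) = 0 := by nlinarith
  -- each Laplacian term is zero
  have hAp : ∀ p, (y p) ⬝ᵥ (W - 1) *ᵥ (y p) = 0 := by
    intro p
    have := Finset.sum_eq_zero_iff_of_nonpos
      (fun p (_ : p ∈ Finset.univ) => lap_nonpos W hnonneg hrow hcol (y p)) |>.mp hA0
    exact this p (Finset.mem_univ p)
  have hBq : ∀ q, (J q *ᵥ z q) = 0 := by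
    intro q
    have h1 : ∀ q ∈ Finset.univ, (0:ℝ) ≤ (J q *ᵥ z q) ⬝ᵥ (J q *ᵥ z q) :=
      fun q _ => Finset.sum_nonneg fun i _ => mul_self_nonneg _
    have h2 := (Finset.sum_eq_zero_iff_of_nonneg h1).mp hB0 q (Finset.mem_univ q)
    exact (dotProduct_self_eq_zero).mp h2
  -- consensus: y p constant
  have hc : ∀ p, ∃ c, y p = fun _ => c := fun p =>
    hconn (y p) (lap_eq_zero W hnonneg hrow hcol (y p) (hAp p))
  choose c hcfun using hc
  have hzc : ∀ q, z q = c := by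
    intro q; funext p
    have := congrFun (hcfun p) q
    simpa [hy, hz] using this
  have hc0 : c = 0 := hnull c (fun q => by rw [← hzc q]; exact hBq q)
  apply hx
  funext qp
  have := congrFun (hzc qp.1) qp.2
  simpa [hz, hc0] using this
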